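/- arXiv:2603.16022 — 4 statements merged into one kernel-verified Lean document; each statement's English description precedes it below -/
import Mathlib

section
/- Let G be a locally compact second countable group and let H be a closed subgroup of G. Then the normalizer N_G(H) admits a G-invariant Borel probability measure on G/N_G(H) if and only if there exists an invariant random subgroup μ of G (a conjugation-invariant Borel probability measure on the Chabauty space of closed subgroups) such that μ gives full measure to the conjugacy class {gHg⁻¹ : g ∈ G}. -/
open MeasureTheory

/-- The Chabauty space of closed subgroups of `G`. -/
def Chab (G : Type*) [Group G] [TopologicalSpace G] : Type _ :=
  {H : Subgroup G // IsClosed (H : Set G)}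

/-- The Chabauty topology, generated by the sets `Hit(V)` for `V` open
and `Miss(K)` for `K` compact. -/
instance chabTop (G : Type*) [Group G] [TopologicalSpace G] : TopologicalSpace (Chab G) :=
  TopologicalSpace.generateFrom
    ({S | ∃ V : Set G, IsOpen V ∧ S = {H : Chab G | ((H.1 : Set G) ∩ V).Nonempty}} ∪
     {S | ∃ K : Set G, IsCompact K ∧ S = {H : Chab G | (H.1 : Set G) ∩ K = ∅}})

instance chabMeas (G : Type*) [Group G] [TopologicalSpace G] : MeasurableSpace (Chab G) :=
  borel _

/-- Conjugation action of `G` on its Chabauty space. -/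
def conjChab {G : Type*} [Group G] [TopologicalSpace G] [IsTopologicalGroup G]
    (g : G) (H : Chab G) : Chab G :=
  ⟨H.1.map (MulAut.conj g).toMonoidHom, by
    have h1 : (⇑(MulAut.conj g).toMonoidHom) '' ((H.1 : Subgroup G) : Set G)
        = ((Homeomorph.mulLeft g).trans (Homeomorph.mulRight g⁻¹)) ''
            ((H.1 : Subgroup G) : Set G) := by
      apply Set.image_congr'
      intro x
      simp [mul_assoc]
    rw [Subgroup.coe_map, h1, Homeomorph.isClosed_image]
    exact H.2⟩

open TopologicalSpace Set

/-!
The orbit map `g N_G(H) ↦ g H g⁻¹` is a continuous, injective, `G`-equivariant map from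
`G ⧸ N_G(H)` onto the conjugacy class of `H` in the Chabauty space. The normalizer is the
stabilizer of `H` for the continuous conjugation action on the Hausdorff space `Chab G`, hence
closed, so `G ⧸ N_G(H)` is a locally compact second countable Hausdorff space and thus Polish.
By the Lusin–Souslin theorem the orbit map is then a measurable embedding, and pushing forward
and pulling back along it match the invariant probability measures on `G ⧸ N_G(H)` with the
invariant random subgroups concentrated on the conjugacy class.
-/

instance OnePoint.secondCountableTopology {X : Type*} [TopologicalSpace X] [T2Space X]
    [LocallyCompactSpace X] [SecondCountableTopology X] :
    SecondCountableTopology (OnePoint X) := by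
  let K := CompactExhaustion.choice X
  let B : Set (Set (OnePoint X)) :=
    ((fun s => (↑) '' s) '' countableBasis X) ∪ range fun n => ((↑) '' K n)ᶜ
  refine IsTopologicalBasis.secondCountableTopology (b := B) ?_
    (((countable_countableBasis X).image _).union (countable_range _))
  refine isTopologicalBasis_of_isOpen_of_nhds ?_ ?_
  · rintro u (⟨b, hb, rfl⟩ | ⟨n, rfl⟩)
    · exact OnePoint.isOpenEmbedding_coe.isOpenMap _ (isOpen_of_mem_countableBasis hb)
    · exact ((K.isCompact n).image OnePoint.continuous_coe).isClosed.isOpen_compl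
  · rintro (_ | x) U hxU hU
    · obtain ⟨n, hn⟩ :=
        K.exists_superset_of_isCompact ((OnePoint.isOpen_iff_of_mem hxU).1 hU).2
      refine ⟨((↑) '' K n)ᶜ, Or.inr ⟨n, rfl⟩, mem_compl OnePoint.infty_notMem_image_coe, ?_⟩
      rintro (_ | y) hy
      · exact hxU
      · by_contra hyU
        exact hy (mem_image_of_mem _ (hn hyU))
    · obtain ⟨b, hb, hxb, hbU⟩ := (isBasis_countableBasis X).exists_subset_of_mem_open hxU
        (hU.preimage OnePoint.continuous_coe)
      exact ⟨(↑) '' b, Or.inl ⟨b, hb, rfl⟩, mem_image_of_mem _ hxb, image_subset_iff.2 hbU⟩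

theorem polishSpace_of_locallyCompact_of_secondCountable (X : Type*) [TopologicalSpace X]
    [T2Space X] [LocallyCompactSpace X] [SecondCountableTopology X] : PolishSpace X := by
  let _ : MetricSpace (OnePoint X) := metrizableSpaceMetric _
  have : PolishSpace (range ((↑) : X → OnePoint X)) := OnePoint.isOpen_range_coe.polishSpace
  exact OnePoint.isOpenEmbedding_coe.isEmbedding.toHomeomorph.isClosedEmbedding.polishSpace

theorem Continuous.map_borel_eq_of_separationQuotient {X Y : Type*} [TopologicalSpace X]
    [PolishSpace (SeparationQuotient X)] [TopologicalSpace Y] [T0Space Y]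
    [SecondCountableTopology Y] {f : X → Y} (hf : Continuous f) (hsurj : Function.Surjective f) :
    MeasurableSpace.map f (borel X) = borel Y := by
  have hborel : borel X = (borel (SeparationQuotient X)).comap SeparationQuotient.mk := by
    rw [← borel_comap, ← SeparationQuotient.isInducing_mk.eq_induced]
  have hlift : Continuous (SeparationQuotient.lift f fun _ _ h => (h.map hf).eq) :=
    SeparationQuotient.continuous_lift hf
  rw [hborel, show f = SeparationQuotient.lift f (fun _ _ h => (h.map hf).eq) ∘
      SeparationQuotient.mk from rfl, ← MeasurableSpace.map_comp,
    MeasurableSpace.map_comap_eq_of_surjective SeparationQuotient.surjective_mk]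
  exact hlift.map_borel_eq (Function.Surjective.of_comp (g := SeparationQuotient.mk) hsurj)

/-- `G` need not be Hausdorff, hence not Polish, but its separation quotient is Polish and has
the same Borel sets. -/
theorem QuotientGroup.borelSpace_of_isClosed {G : Type*} [Group G] [TopologicalSpace G]
    [IsTopologicalGroup G] [LocallyCompactSpace G] [SecondCountableTopology G]
    [MeasurableSpace G] [BorelSpace G] (N : Subgroup G) [IsClosed (N : Set G)] :
    BorelSpace (G ⧸ N) := by
  have : LocallyCompactSpace (SeparationQuotient G) :=
    SeparationQuotient.isOpenQuotientMap_mk.locallyCompactSpace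
  have : SecondCountableTopology (SeparationQuotient G) :=
    SeparationQuotient.isOpenQuotientMap_mk.isQuotientMap.secondCountableTopology
      SeparationQuotient.isOpenMap_mk
  have := polishSpace_of_locallyCompact_of_secondCountable (SeparationQuotient G)
  refine ⟨?_⟩
  show MeasurableSpace.map _ _ = _
  rw [BorelSpace.measurable_eq (α := G)]
  exact QuotientGroup.continuous_mk.map_borel_eq_of_separationQuotient QuotientGroup.mk_surjective

theorem MeasurableEmbedding.exists_smulInvariant_isProbabilityMeasure_iff {G X Y : Type*}
    [Group G] [MulAction G X] [MulAction G Y] [MeasurableSpace X] [MeasurableSpace Y]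
    {f : X → Y} (hf : MeasurableEmbedding f) (hf_smul : ∀ (g : G) (x : X), f (g • x) = g • f x) :
    (∃ ν : Measure X, IsProbabilityMeasure ν ∧ SMulInvariantMeasure G X ν) ↔
      ∃ μ : Measure Y, IsProbabilityMeasure μ ∧ SMulInvariantMeasure G Y μ ∧ μ (range f) = 1 := by
  constructor
  · rintro ⟨ν, hν, hνG⟩
    refine ⟨ν.map f, Measure.isProbabilityMeasure_map hf.measurable.aemeasurable,
      ⟨fun g s hs => ?_⟩, ?_⟩
    · have : f ⁻¹' ((g • ·) ⁻¹' s) = (g • ·) ⁻¹' (f ⁻¹' s) := by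
        ext x
        simp [hf_smul]
      rw [hf.map_apply, hf.map_apply, this, hνG.measure_preimage_smul g (hf.measurable hs)]
    · rw [hf.map_apply, preimage_range, measure_univ]
  · rintro ⟨μ, hμ, hμG, hrange⟩
    refine ⟨μ.comap f, ⟨by rw [hf.comap_apply, image_univ, hrange]⟩, ⟨fun g s hs => ?_⟩⟩
    rw [hf.comap_apply, hf.comap_apply, preimage_smul, image_smul_comm f _ _ (hf_smul _),
      ← preimage_smul, hμG.measure_preimage_smul g (hf.measurableSet_image' hs)]

theorem MulAction.measurableEmbedding_ofQuotientStabilizer {G X : Type*} [Group G]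
    [TopologicalSpace G] [IsTopologicalGroup G] [LocallyCompactSpace G]
    [SecondCountableTopology G] [MeasurableSpace G] [BorelSpace G] [MulAction G X]
    [TopologicalSpace X] [T2Space X] [MeasurableSpace X] [BorelSpace X] (x : X)
    (hx : Continuous fun g : G => g • x) :
    MeasurableEmbedding (ofQuotientStabilizer G x) := by
  have : IsClosed (stabilizer G x : Set G) := isClosed_eq hx continuous_const
  have := polishSpace_of_locallyCompact_of_secondCountable (G ⧸ stabilizer G x)
  have := QuotientGroup.borelSpace_of_isClosed (stabilizer G x)
  have hcont : Continuous (ofQuotientStabilizer G x) :=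
    (QuotientGroup.isQuotientMap_mk _).continuous_iff.2 hx
  exact hcont.measurableEmbedding (injective_ofQuotientStabilizer G x)

theorem MulAction.range_ofQuotientStabilizer {G X : Type*} [Group G] [MulAction G X] (x : X) :
    range (ofQuotientStabilizer G x) = orbit G x :=
  (QuotientGroup.mk_surjective.range_comp _).symm

namespace Chab

variable {G : Type*} [Group G] [TopologicalSpace G]

theorem isOpen_setOf_inter_nonempty {V : Set G} (hV : IsOpen V) :
    IsOpen {L : Chab G | ((L.1 : Set G) ∩ V).Nonempty} :=
  isOpen_generateFrom_of_mem (Or.inl ⟨V, hV, rfl⟩)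

theorem isOpen_setOf_inter_eq_empty {K : Set G} (hK : IsCompact K) :
    IsOpen {L : Chab G | (L.1 : Set G) ∩ K = ∅} :=
  isOpen_generateFrom_of_mem (Or.inr ⟨K, hK, rfl⟩)

theorem ext {L M : Chab G} (h : (L.1 : Set G) = M.1) : L = M :=
  Subtype.ext (SetLike.coe_injective h)

/-- Hit sets of open sets and miss sets of compact neighbourhoods separate subgroups. -/
instance [LocallyCompactSpace G] : T2Space (Chab G) := by
  have separate : ∀ (A B : Chab G) (x : G), x ∈ (A.1 : Set G) → x ∉ (B.1 : Set G) →
      ∃ U V : Set (Chab G), IsOpen U ∧ IsOpen V ∧ A ∈ U ∧ B ∈ V ∧ Disjoint U V := by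
    intro A B x hxA hxB
    obtain ⟨s, hs, hsB, hs_compact⟩ :=
      local_compact_nhds (B.2.isOpen_compl.mem_nhds hxB)
    refine ⟨_, _, isOpen_setOf_inter_nonempty isOpen_interior,
      isOpen_setOf_inter_eq_empty hs_compact, ⟨x, hxA, mem_interior_iff_mem_nhds.2 hs⟩,
      eq_empty_iff_forall_notMem.2 fun y hy => hsB hy.2 hy.1, ?_⟩
    rw [disjoint_left]
    rintro L ⟨y, hyL, hys⟩ hLs
    exact (eq_empty_iff_forall_notMem.1 hLs) y ⟨hyL, interior_subset hys⟩
  refine ⟨fun A B hAB => ?_⟩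
  by_cases hAB' : (A.1 : Set G) ⊆ B.1
  · obtain ⟨x, hxB, hxA⟩ := not_subset.1 fun hBA => hAB (ext (hAB'.antisymm hBA))
    obtain ⟨U, V, hU, hV, hBU, hAV, hUV⟩ := separate B A x hxB hxA
    exact ⟨V, U, hV, hU, hAV, hBU, hUV.symm⟩
  · obtain ⟨x, hxA, hxB⟩ := not_subset.1 hAB'
    exact separate A B x hxA hxB

instance : BorelSpace (Chab G) := ⟨rfl⟩

variable [IsTopologicalGroup G]

theorem coe_conjChab (g : G) (L : Chab G) :
    ((conjChab g L).1 : Set G) = (fun x => g * x * g⁻¹) '' (L.1 : Set G) := by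
  rw [conjChab, Subgroup.coe_map]
  rfl

instance : MulAction G (Chab G) where
  smul := conjChab
  one_smul L := ext <| by
    show ((conjChab 1 L).1 : Set G) = L.1
    rw [coe_conjChab]
    simp
  mul_smul g h L := ext <| by
    show ((conjChab (g * h) L).1 : Set G) = (conjChab g (conjChab h L)).1
    rw [coe_conjChab, coe_conjChab, coe_conjChab, image_image]
    simp [mul_assoc]

theorem coe_smul (g : G) (L : Chab G) :
    ((g • L).1 : Set G) = (fun x => g * x * g⁻¹) '' (L.1 : Set G) :=
  coe_conjChab g L

theorem stabilizer_eq_normalizer (L : Chab G) :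
    MulAction.stabilizer G L = Subgroup.normalizer (L.1 : Set G) := by
  ext g
  rw [MulAction.mem_stabilizer_iff, Subgroup.mem_normalizer_iff_map_conj_eq]
  exact Subtype.ext_iff

theorem continuous_smul_const (L : Chab G) : Continuous fun g : G => g • L := by
  rw [continuous_generateFrom_iff]
  rintro s (⟨V, hV, rfl⟩ | ⟨K, hK, rfl⟩)
  · have : (fun g : G => g • L) ⁻¹' {M | ((M.1 : Set G) ∩ V).Nonempty} =
        ⋃ x ∈ (L.1 : Set G), (fun g => g * x * g⁻¹) ⁻¹' V := by
      ext g
      rw [mem_preimage, mem_ofPred_eq, coe_smul]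
      simp [Set.Nonempty]
    rw [this]
    exact isOpen_biUnion fun x _ => hV.preimage (by fun_prop)
  · have : CompactSpace K := isCompact_iff_compactSpace.mp hK
    -- `g • L` meets `K` iff `g` lies in the projection of this closed subset of `K × G`
    let T : Set (K × G) := {p | p.2⁻¹ * p.1 * p.2 ∈ (L.1 : Set G)}
    have hT : IsClosed T := L.2.preimage (by fun_prop)
    have : (fun g : G => g • L) ⁻¹' {M | (M.1 : Set G) ∩ K = ∅} = (Prod.snd '' T)ᶜ := by
      ext g
      rw [mem_preimage, mem_ofPred_eq, coe_smul]
      simp only [eq_empty_iff_forall_notMem, mem_inter_iff, mem_image, mem_compl_iff, T,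
        mem_ofPred_eq]
      constructor
      · rintro h ⟨⟨⟨k, hk⟩, g'⟩, hkL, rfl⟩
        exact h k ⟨⟨_, hkL, by group⟩, hk⟩
      · rintro h x ⟨⟨a, ha, rfl⟩, haK⟩
        exact h ⟨⟨⟨_, haK⟩, g⟩, by rwa [show g⁻¹ * (g * a * g⁻¹) * g = a by group], rfl⟩
    rw [this]
    exact (isClosedMap_snd_of_compactSpace _ hT).isOpen_compl

end Chab

/-- for a closed subgroup `H` of a locally compact second countable
group `G`, the quotient `G ⧸ N_G(H)` carries a `G`-invariant Borel probability
measure if and only if there is an invariant random subgroup of `G` giving full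
measure to the conjugacy class of `H` in the Chabauty space. -/
theorem cofinite_normalizer_iff_irs_on_conjugacy_class
    (G : Type*) [Group G] [TopologicalSpace G] [IsTopologicalGroup G]
    [LocallyCompactSpace G] [SecondCountableTopology G]
    [MeasurableSpace G] [BorelSpace G]
    (H : Subgroup G) (hH : IsClosed ((H : Subgroup G) : Set G)) :
    (∃ ν : Measure (G ⧸ Subgroup.normalizer (H : Set G)), IsProbabilityMeasure ν ∧
        ∀ g : G, ∀ A : Set (G ⧸ Subgroup.normalizer (H : Set G)), MeasurableSet A →
          ν ((fun x => g • x) ⁻¹' A) = ν A) ↔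
      (∃ μ : Measure (Chab G), IsProbabilityMeasure μ ∧
        (∀ g : G, ∀ A : Set (Chab G), MeasurableSet A →
          μ (conjChab g ⁻¹' A) = μ A) ∧
        μ {K : Chab G | ∃ g : G, K = conjChab g ⟨H, hH⟩} = 1) := by
  set H₀ : Chab G := ⟨H, hH⟩
  have hclass : {K : Chab G | ∃ g : G, K = conjChab g H₀} = MulAction.orbit G H₀ := by
    ext K
    exact exists_congr fun g => eq_comm
  rw [hclass, show Subgroup.normalizer (H : Set G) = MulAction.stabilizer G H₀ from
    (Chab.stabilizer_eq_normalizer H₀).symm]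
  have key := (MulAction.measurableEmbedding_ofQuotientStabilizer H₀
    (Chab.continuous_smul_const H₀)).exists_smulInvariant_isProbabilityMeasure_iff
    (MulAction.ofQuotientStabilizer_smul G H₀)
  rw [MulAction.range_ofQuotientStabilizer] at key
  simp only [smulInvariantMeasure_iff] at key
  exact key
end

section
/- Let G be a locally compact, second countable, σ-compact group. Then the set C of compact subgroups of G is a Borel subset of the Chabauty space Sub(G); in fact C is a countable union of closed subsets of Sub(G). -/
open TopologicalSpace MeasureTheory

section

variable {G : Type*} [Group G] [TopologicalSpace G]

instance : BorelSpace (Chab G) := ⟨rfl⟩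

theorem Chab.isOpen_setOf_inter_nonempty_s1 {V : Set G} (hV : IsOpen V) :
    IsOpen {H : Chab G | ((H.1 : Set G) ∩ V).Nonempty} :=
  GenerateOpen.basic _ (Or.inl ⟨V, hV, rfl⟩)

theorem Chab.isClosed_setOf_subset {F : Set G} (hF : IsClosed F) :
    IsClosed {H : Chab G | (H.1 : Set G) ⊆ F} := by
  refine isOpen_compl_iff.mp ?_
  convert isOpen_setOf_inter_nonempty_s1 hF.isOpen_compl using 1
  ext H
  simp only [Set.mem_compl_iff, Set.mem_ofPred_eq, Set.inter_compl_nonempty_iff]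

theorem Chab.setOf_isCompact_eq_iUnion [R1Space G] (K : CompactExhaustion G) :
    {H : Chab G | IsCompact (H.1 : Set G)} = ⋃ n, {H | (H.1 : Set G) ⊆ closure (K n)} := by
  ext H
  simp only [Set.mem_ofPred_eq, Set.mem_iUnion]
  constructor
  · intro hH
    obtain ⟨n, hn⟩ := K.exists_superset_of_isCompact hH
    exact ⟨n, hn.trans subset_closure⟩
  · rintro ⟨n, hn⟩
    exact (K.isCompact n).closure.of_isClosed_subset H.2 hn

end

theorem compactSubgroups_measurable_general
    (G : Type*) [Group G] [TopologicalSpace G] [IsTopologicalGroup G]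
    [LocallyCompactSpace G] [SigmaCompactSpace G] :
    MeasurableSet {H : Chab G | IsCompact ((H.1 : Subgroup G) : Set G)} ∧
      ∃ F : ℕ → Set (Chab G), (∀ n, IsClosed (F n)) ∧
        {H : Chab G | IsCompact ((H.1 : Subgroup G) : Set G)} = ⋃ n, F n := by
  let K := CompactExhaustion.choice G
  have hclosed : ∀ n, IsClosed {H : Chab G | (H.1 : Set G) ⊆ closure (K n)} :=
    fun n => Chab.isClosed_setOf_subset isClosed_closure
  refine ⟨?_, _, hclosed, Chab.setOf_isCompact_eq_iUnion K⟩
  rw [Chab.setOf_isCompact_eq_iUnion K]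
  exact .iUnion fun n => (hclosed n).measurableSet

/-- in a locally compact, second countable, σ-compact group, the set of
compact subgroups is Borel in the Chabauty space; in fact it is a countable union of
closed subsets. -/
theorem compactSubgroups_measurable
    (G : Type*) [Group G] [TopologicalSpace G] [IsTopologicalGroup G]
    [LocallyCompactSpace G] [SecondCountableTopology G] [SigmaCompactSpace G] :
    MeasurableSet {H : Chab G | IsCompact ((H.1 : Subgroup G) : Set G)} ∧
      ∃ F : ℕ → Set (Chab G), (∀ n, IsClosed (F n)) ∧
        {H : Chab G | IsCompact ((H.1 : Subgroup G) : Set G)} = ⋃ n, F n :=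
  compactSubgroups_measurable_general G
end

section
/- Let G be a group acting properly and coboundedly by isometries on a metric space (X,d). Then the set B = {b ∈ G : the conjugacy class {g⁻¹bg : g ∈ G} has compact closure} equals the set of elements with uniformly bounded displacement: B = {b ∈ G : ∃ N > 0, ∀ x ∈ X, d(bx, x) < N}. -/
/-!
Displacement `x ↦ dist (c • x) x` of an isometry is 2-Lipschitz, and conjugating `b` by `g`
moves the point at which its displacement is read from `x` to `g • x`. So if the orbit of `y`
is `R`-dense, `b` displaces every point by at most `2R` more than the largest displacement of `y`
under a conjugate of `b`, which is finite when the conjugacy class is relatively compact.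
Conversely, if `b` displaces every point by less than `N`, each conjugate of `b` moves `y` into
`closedBall y N`, so the conjugacy class lies in the relatively compact set of group elements
that move this ball to a set meeting it.
-/

open Metric

section IsIsometricSMul

variable {M G X : Type*} [PseudoMetricSpace X]

theorem dist_smul_self_le [SMul M X] [IsIsometricSMul M X] (c : M) (x y : X) :
    dist (c • x) x ≤ dist (c • y) y + 2 * dist x y := by
  calc dist (c • x) x ≤ dist (c • x) (c • y) + dist (c • y) y + dist y x :=
        dist_triangle4 _ _ _ _
    _ = dist (c • y) y + 2 * dist x y := by rw [dist_smul, dist_comm y x]; ring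

variable [Group G] [MulAction G X] [IsIsometricSMul G X]

theorem dist_conj_smul_self (g b : G) (x : X) :
    dist ((g⁻¹ * b * g) • x) x = dist (b • g • x) (g • x) := by
  rw [← dist_smul g, smul_smul, show g * (g⁻¹ * b * g) = b * g by group, mul_smul]

theorem dist_smul_self_lt_of_dist_conj_smul_le {y : X} {R : ℝ}
    (hy : ∀ x : X, ∃ g : G, dist (g • x) y < R) {b : G} {M : ℝ}
    (hM : ∀ g : G, dist ((g⁻¹ * b * g) • y) y ≤ M) (x : X) :
    dist (b • x) x < M + 2 * R := by
  obtain ⟨g, hg⟩ := hy x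
  calc dist (b • x) x = dist ((g⁻¹⁻¹ * b * g⁻¹) • g • x) (g • x) := by
        rw [dist_conj_smul_self, inv_smul_smul]
    _ ≤ dist ((g⁻¹⁻¹ * b * g⁻¹) • y) y + 2 * dist (g • x) y :=
        dist_smul_self_le _ _ _
    _ < M + 2 * R := by linarith [hM g⁻¹]

end IsIsometricSMul

theorem exists_dist_smul_le_of_isCompact_closure {G X : Type*} [TopologicalSpace G]
    [PseudoMetricSpace X] [SMul G X] [ContinuousSMul G X] {S : Set G}
    (hS : IsCompact (closure S)) (y : X) : ∃ M : ℝ, ∀ c ∈ S, dist (c • y) y ≤ M := by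
  obtain ⟨M, hM⟩ := hS.bddAbove_image (f := fun c : G => dist (c • y) y) (by fun_prop)
  exact ⟨M, fun c hc => hM ⟨c, subset_closure hc, rfl⟩⟩

theorem smul_image_closedBall_inter_nonempty {G X : Type*} [PseudoMetricSpace X] [SMul G X]
    {c : G} {y : X} {N : ℝ} (hN : 0 ≤ N) (hc : dist (c • y) y ≤ N) :
    ((fun z : X => c • z) '' closedBall y N ∩ closedBall y N).Nonempty :=
  ⟨c • y, ⟨y, mem_closedBall_self hN, rfl⟩, hc⟩

theorem relatively_compact_conjugacy_class_iff_bounded_displacement_general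
    {G X : Type*} [Group G] [TopologicalSpace G]
    [MetricSpace X] [MulAction G X] [ContinuousSMul G X]
    (hiso : ∀ g : G, Isometry (fun z : X => g • z))
    (hcobounded : ∃ y : X, ∃ R : ℝ, 0 < R ∧ ∀ x : X, ∃ g : G, dist (g • x) y < R)
    (hproper : ∀ B : Set X, Bornology.IsBounded B →
      IsCompact (closure {g : G | (((fun z : X => g • z) '' B) ∩ B).Nonempty})) :
    {b : G | IsCompact (closure {c : G | ∃ g : G, c = g⁻¹ * b * g})} =
      {b : G | ∃ N : ℝ, 0 < N ∧ ∀ x : X, dist (b • x) x < N} := by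
  have : IsIsometricSMul G X := ⟨hiso⟩
  obtain ⟨y, R, hR, hy⟩ := hcobounded
  ext b
  constructor
  · intro hK
    obtain ⟨M, hM⟩ := exists_dist_smul_le_of_isCompact_closure hK y
    have hconj (g : G) : dist ((g⁻¹ * b * g) • y) y ≤ M := hM _ ⟨g, rfl⟩
    have hM₀ : 0 ≤ M := dist_nonneg.trans (hconj 1)
    exact ⟨M + 2 * R, by positivity, dist_smul_self_lt_of_dist_conj_smul_le hy hconj⟩
  · rintro ⟨N, hN, hb⟩
    have hconj : {c : G | ∃ g : G, c = g⁻¹ * b * g} ⊆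
        {c : G | ((fun z : X => c • z) '' closedBall y N ∩ closedBall y N).Nonempty} := by
      rintro _ ⟨g, rfl⟩
      refine smul_image_closedBall_inter_nonempty hN.le ?_
      rw [dist_conj_smul_self]
      exact (hb _).le
    exact (hproper _ isBounded_closedBall).of_isClosed_subset isClosed_closure (closure_mono hconj)

/-- if a (locally compact second countable) group `G` acts properly and
coboundedly by isometries on a metric space `X`, then the set of elements with
relatively compact conjugacy class coincides with the set of elements of uniformly
bounded displacement. -/
theorem relatively_compact_conjugacy_class_iff_bounded_displacement
    {G X : Type*} [Group G] [TopologicalSpace G] [IsTopologicalGroup G]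
    [LocallyCompactSpace G] [SecondCountableTopology G]
    [MetricSpace X] [MulAction G X] [ContinuousSMul G X]
    (hiso : ∀ g : G, Isometry (fun z : X => g • z))
    (hcobounded : ∃ y : X, ∃ R : ℝ, 0 < R ∧ ∀ x : X, ∃ g : G, dist (g • x) y < R)
    (hproper : ∀ B : Set X, Bornology.IsBounded B →
      IsCompact (closure {g : G | (((fun z : X => g • z) '' B) ∩ B).Nonempty})) :
    {b : G | IsCompact (closure {c : G | ∃ g : G, c = g⁻¹ * b * g})} =
      {b : G | ∃ N : ℝ, 0 < N ∧ ∀ x : X, dist (b • x) x < N} :=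
  relatively_compact_conjugacy_class_iff_bounded_displacement_general hiso hcobounded hproper
end

section
/- Let G be a locally compact group which is an ascending union G = ⋃ₙ Oₙ of open subgroups O₀ ⊆ O₁ ⊆ ⋯. Then the locally elliptic radical satisfies E(G) = ⋃_{k ∈ ℕ} ⋂_{n ≥ k} E(Oₙ), where E(H) denotes the locally elliptic radical of H. -/
/-- A subgroup is locally elliptic if each of its compact subsets is contained in a
compact subgroup of it. -/
def IsLocallyElliptic {G : Type*} [Group G] [TopologicalSpace G] (H : Subgroup G) : Prop :=
  ∀ K : Set G, K ⊆ (H : Set G) → IsCompact K →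
    ∃ C : Subgroup G, C ≤ H ∧ IsCompact ((C : Subgroup G) : Set G) ∧ K ⊆ (C : Set G)

/-- `E` is the locally elliptic radical of the subgroup `O`: it is a closed, locally
elliptic subgroup of `O`, normalized by `O`, containing every locally elliptic
subgroup of `O` normalized by `O`. -/
def IsLocallyEllipticRadicalOf {G : Type*} [Group G] [TopologicalSpace G]
    (E O : Subgroup G) : Prop :=
  E ≤ O ∧ IsClosed ((E : Subgroup G) : Set G) ∧
    (∀ g ∈ O, ∀ x ∈ E, g * x * g⁻¹ ∈ E) ∧ IsLocallyElliptic E ∧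
    ∀ N : Subgroup G, N ≤ O → (∀ g ∈ O, ∀ x ∈ N, g * x * g⁻¹ ∈ N) →
      IsLocallyElliptic N → N ≤ E

/-!
Write `Aₖ = ⋂_{n ≥ k} E(Oₙ)`, so that the right-hand side is `liminf E(Oₙ)` in the lattice of
subgroups. If `O' ≤ O` is an open subgroup, then `E(O) ∩ O'` is a closed subgroup of the locally
elliptic group `E(O)`, normalised by `O'`, hence contained in `E(O')`. This gives
`E(G) ⊆ liminf E(Oₙ)`, and also `liminf E(Oₙ) ∩ Oₘ ⊆ Aₘ`. Conversely `liminf E(Oₙ)` is normal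
in `G`, and a compact subset of it lies in some `Oₘ`, hence in the closed subgroup `Aₘ` of the
locally elliptic group `E(Oₘ)`; so `liminf E(Oₙ)` is locally elliptic and lies in `E(G)`.
-/

open Filter

section LocallyElliptic

variable {G : Type*} [Group G] [TopologicalSpace G]

theorem IsLocallyElliptic.of_le_of_isClosed {H S : Subgroup G} (hH : IsLocallyElliptic H)
    (hSH : S ≤ H) (hS : IsClosed (S : Set G)) : IsLocallyElliptic S := by
  intro K hKS hK
  obtain ⟨C, hCH, hC, hKC⟩ := hH K (hKS.trans hSH) hK
  exact ⟨C ⊓ S, inf_le_right, hC.inter_right hS, Set.subset_inter hKC hKS⟩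

theorem IsLocallyEllipticRadicalOf.inf_le [SeparatelyContinuousMul G] {E O E' O' : Subgroup G}
    (h : IsLocallyEllipticRadicalOf E O) (h' : IsLocallyEllipticRadicalOf E' O')
    (hO' : IsOpen (O' : Set G)) (hle : O' ≤ O) : E ⊓ O' ≤ E' := by
  obtain ⟨-, hclosed, hconj, hell, -⟩ := h
  refine h'.2.2.2.2 (E ⊓ O') inf_le_right (fun g hg x hx => ⟨hconj g (hle hg) x hx.1, ?_⟩) ?_
  · exact O'.mul_mem (O'.mul_mem hg hx.2) (O'.inv_mem hg)
  · exact hell.of_le_of_isClosed inf_le_left (hclosed.inter (O'.isClosed_of_isOpen hO'))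

end LocallyElliptic

namespace Subgroup

variable {G : Type*} [Group G]

theorem mem_liminf_atTop_iff {E : ℕ → Subgroup G} {x : G} :
    x ∈ liminf E atTop ↔ ∀ᶠ n in atTop, x ∈ E n := by
  have hdir : Directed (· ≤ ·) fun k => ⨅ n ≥ k, E n :=
    Monotone.directed_le fun _ _ hjk => biInf_mono fun _ => hjk.trans
  simp only [liminf_eq_iSup_iInf_of_nat, mem_iSup_of_directed hdir, mem_iInf, eventually_atTop]

theorem coe_liminf_atTop (E : ℕ → Subgroup G) :
    ((liminf E atTop : Subgroup G) : Set G) = ⋃ k : ℕ, ⋂ n ∈ {n : ℕ | k ≤ n}, (E n : Set G) := by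
  ext x
  simp only [SetLike.mem_coe, mem_liminf_atTop_iff, eventually_atTop, Set.mem_iUnion,
    Set.mem_iInter, Set.mem_ofPred_eq]

end Subgroup

theorem IsCompact.exists_subset_of_monotone {X : Type*} [TopologicalSpace X] {K : Set X}
    (hK : IsCompact K) {U : ℕ → Set X} (hU : ∀ n, IsOpen (U n)) (hmono : Monotone U)
    (hcover : K ⊆ ⋃ n, U n) : ∃ n, K ⊆ U n :=
  hK.elim_directed_cover U hU hcover hmono.directed_le

section AscendingUnion

variable {G : Type*} [Group G] [TopologicalSpace G] {O E : ℕ → Subgroup G}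

theorem liminf_inf_le_biInf [SeparatelyContinuousMul G] (hopen : ∀ n, IsOpen (O n : Set G))
    (hmono : Monotone O) (hE : ∀ n, IsLocallyEllipticRadicalOf (E n) (O n)) (m : ℕ) :
    liminf E atTop ⊓ O m ≤ ⨅ n ≥ m, E n := by
  rintro x ⟨hx, hxm⟩
  obtain ⟨k, hk⟩ := eventually_atTop.1 (Subgroup.mem_liminf_atTop_iff.1 hx)
  refine Subgroup.mem_iInf.2 fun n => Subgroup.mem_iInf.2 fun hmn => ?_
  rcases le_total k n with hkn | hnk
  · exact hk n hkn
  · exact (hE k).inf_le (hE n) (hopen n) (hmono hnk) ⟨hk k le_rfl, hmono hmn hxm⟩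

theorem conj_mem_liminf (hmono : Monotone O) (hunion : ∀ g : G, ∃ n, g ∈ O n)
    (hE : ∀ n, IsLocallyEllipticRadicalOf (E n) (O n)) (g : G) {x : G}
    (hx : x ∈ liminf E atTop) : g * x * g⁻¹ ∈ liminf E atTop := by
  obtain ⟨m, hgm⟩ := hunion g
  have hg : ∀ᶠ n in atTop, g ∈ O n := eventually_atTop.2 ⟨m, fun n hmn => hmono hmn hgm⟩
  refine Subgroup.mem_liminf_atTop_iff.2 ((Subgroup.mem_liminf_atTop_iff.1 hx).and hg |>.mono ?_)
  exact fun n ⟨hxn, hgn⟩ => (hE n).2.2.1 g hgn x hxn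

theorem isLocallyElliptic_liminf [SeparatelyContinuousMul G] (hopen : ∀ n, IsOpen (O n : Set G))
    (hmono : Monotone O) (hunion : ∀ g : G, ∃ n, g ∈ O n)
    (hE : ∀ n, IsLocallyEllipticRadicalOf (E n) (O n)) : IsLocallyElliptic (liminf E atTop) := by
  intro K hK hKc
  obtain ⟨m, hKm⟩ := hKc.exists_subset_of_monotone hopen (SetLike.coe_mono.comp hmono)
    fun x _ => Set.mem_iUnion.2 (hunion x)
  have hA : IsLocallyElliptic (⨅ n ≥ m, E n) := by
    refine (hE m).2.2.2.1.of_le_of_isClosed (iInf₂_le m le_rfl) ?_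
    simpa only [Subgroup.coe_iInf] using
      isClosed_iInter fun n => isClosed_iInter fun _ => (hE n).2.1
  obtain ⟨C, hCA, hC, hKC⟩ :=
    hA K (fun x hx => liminf_inf_le_biInf hopen hmono hE m ⟨hK hx, hKm hx⟩) hKc
  refine ⟨C, hCA.trans ?_, hC, hKC⟩
  exact le_iSup_of_le m le_rfl |>.trans_eq liminf_eq_iSup_iInf_of_nat.symm

theorem IsLocallyEllipticRadicalOf.le_liminf [SeparatelyContinuousMul G]
    (hopen : ∀ n, IsOpen (O n : Set G)) (hmono : Monotone O) (hunion : ∀ g : G, ∃ n, g ∈ O n)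
    (hE : ∀ n, IsLocallyEllipticRadicalOf (E n) (O n)) {EG : Subgroup G}
    (hEG : IsLocallyEllipticRadicalOf EG ⊤) : EG ≤ liminf E atTop := by
  intro x hx
  obtain ⟨m, hxm⟩ := hunion x
  exact Subgroup.mem_liminf_atTop_iff.2 <| eventually_atTop.2
    ⟨m, fun n hmn => hEG.inf_le (hE n) (hopen n) le_top ⟨hx, hmono hmn hxm⟩⟩

end AscendingUnion

theorem locallyEllipticRadical_of_ascending_union_general
    (G : Type*) [Group G] [TopologicalSpace G] [IsTopologicalGroup G]
    (O : ℕ → Subgroup G) (hopen : ∀ n, IsOpen ((O n : Subgroup G) : Set G))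
    (hmono : Monotone O) (hunion : ∀ g : G, ∃ n, g ∈ O n)
    (E : ℕ → Subgroup G) (hE : ∀ n, IsLocallyEllipticRadicalOf (E n) (O n))
    (EG : Subgroup G) (hEG : IsLocallyEllipticRadicalOf EG ⊤) :
    ((EG : Subgroup G) : Set G) =
      ⋃ k : ℕ, ⋂ n ∈ {n : ℕ | k ≤ n}, ((E n : Subgroup G) : Set G) := by
  rw [← Subgroup.coe_liminf_atTop, SetLike.coe_set_eq]
  refine le_antisymm (hEG.le_liminf hopen hmono hunion hE) ?_
  exact hEG.2.2.2.2 _ le_top (fun g _ x hx => conj_mem_liminf hmono hunion hE g hx)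
    (isLocallyElliptic_liminf hopen hmono hunion hE)

/-- if a locally compact group `G` is the ascending union of open
subgroups `Oₙ`, then `E(G) = ⋃ₖ ⋂_{n ≥ k} E(Oₙ)`, where `E` denotes the locally
elliptic radical. -/
theorem locallyEllipticRadical_of_ascending_union
    (G : Type*) [Group G] [TopologicalSpace G] [IsTopologicalGroup G]
    [LocallyCompactSpace G]
    (O : ℕ → Subgroup G) (hopen : ∀ n, IsOpen ((O n : Subgroup G) : Set G))
    (hmono : Monotone O) (hunion : ∀ g : G, ∃ n, g ∈ O n)
    (E : ℕ → Subgroup G) (hE : ∀ n, IsLocallyEllipticRadicalOf (E n) (O n))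
    (EG : Subgroup G) (hEG : IsLocallyEllipticRadicalOf EG ⊤) :
    ((EG : Subgroup G) : Set G) =
      ⋃ k : ℕ, ⋂ n ∈ {n : ℕ | k ≤ n}, ((E n : Subgroup G) : Set G) :=
  locallyEllipticRadical_of_ascending_union_general G O hopen hmono hunion E hE EG hEG
end
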